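/- In the auxiliary greedy algorithm for local experts, no iteration decreases the quantity R(P) + (1/3)·Σ_{t∈M} φ(A_t ∩ I'). Consequently, the output partition P_A satisfies R(P_A) ≥ (1/3)·Σ_{t∈M} φ(A_t). -/

import Mathlib

open Finset

/-- The second-highest value of `f` over a finite type (0 if fewer than two indices),
computed as the maximum over pairs of distinct indices of the minimum of the two values. -/
noncomputable def secondMax {B : Type*} [Fintype B] [DecidableEq B] (f : B → ℝ) : ℝ :=
  ((Finset.univ ×ˢ Finset.univ).filter (fun p : B × B => p.1 ≠ p.2)).fold max 0
    (fun p => min (f p.1) (f p.2))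

/-- The contribution `μ(S)·v(S)` of a part `S`: the second-highest, over bidders `i`,
of `Σ_{j∈S} μ j · vals i j`. -/
noncomputable def partVal {I B : Type*} [Fintype B] [DecidableEq B]
    (μ : I → ℝ) (vals : B → I → ℝ) (S : Finset I) : ℝ :=
  secondMax (fun i => ∑ j ∈ S, μ j * vals i j)

/-- The revenue of a collection of parts. -/
noncomputable def revenue {I B : Type*} [Fintype B] [DecidableEq B]
    (μ : I → ℝ) (vals : B → I → ℝ) (P : Finset (Finset I)) : ℝ :=
  ∑ S ∈ P, partVal μ vals S

/-- `P` is a partition of the whole item set. -/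
def IsPartition {I : Type*} (P : Finset (Finset I)) : Prop :=
  (∀ j : I, ∃ S ∈ P, j ∈ S) ∧
  (∀ S ∈ P, ∀ T ∈ P, S ≠ T → Disjoint S T) ∧
  (∅ : Finset I) ∉ P

/-- `h_j = μ(j)` times the highest value of item `j` among bidders. -/
noncomputable def hval {I B : Type*} [Fintype B] (μ : I → ℝ) (vals : B → I → ℝ)
    (j : I) : ℝ :=
  Finset.univ.fold max 0 (fun i : B => μ j * vals i j)

/-- `φ(S)`: with `owner j` the bidder valuing `j` most, the sum of all but the largest
of the per-bidder totals `Σ_{j ∈ H_i ∩ S} h_j`, i.e. the sum of the `|B|-1` smallest. -/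
noncomputable def phi {I B : Type*} [Fintype B] [DecidableEq I] [DecidableEq B]
    (μ : I → ℝ) (vals : B → I → ℝ) (owner : I → B) (S : Finset I) : ℝ :=
  (∑ j ∈ S, hval μ vals j) -
    Finset.univ.fold max 0 (fun i : B => ∑ j ∈ S.filter (fun j => owner j = i), hval μ vals j)

/-- `Sj` is a cover of `j`: for some mediator `t` with `j ∈ I_t` and some bidder
`i' ≠ owner j`, `Sj ⊆ I_t ∩ H_{i'}`. -/
def IsCover {I B M : Type*} (Iset : M → Finset I) (owner : I → B)
    (j : I) (Sj : Finset I) : Prop :=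
  ∃ (t : M) (i' : B), j ∈ Iset t ∧ i' ≠ owner j ∧
    ∀ x ∈ Sj, x ∈ Iset t ∧ owner x = i'


/-!
Along the greedy run, removing a part `T = {j} ∪ S_j` from the pool `I'` lowers each
`φ(A_t ∩ I')` by at most the `h`-mass of `A_t ∩ T`, and the `A_t` are disjoint, so
`Σ_t φ(A_t ∩ I')` drops by at most `h(T)`. If the cover satisfies `h_j ≤ h(S_j) ≤ 2h_j`,
this is at most `3h_j`, while the part earns at least `min(h_j, h(S_j)) = h_j`. If no cover
reaches `h_j`, then `h(S_j)` is the largest value of a cover, so inside the `A_t` holding `j`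
every bidder other than the owner of `j` holds mass at most `h(S_j)`; deleting `j` then costs at
most `h(S_j)`, the whole step at most `2h(S_j)`, and the part earns `h(S_j)`. Summing the steps
until the pool is empty gives `R(P_A) ≥ (1/3) Σ_t φ(A_t)`.
-/

namespace Finset

open Function

variable {ι κ : Type*} [DecidableEq ι]

theorem sum_sum_inter_le_of_pairwise_disjoint [Fintype κ] {u : κ → Finset ι} {T : Finset ι}
    {w : ι → ℝ} (hu : Pairwise (Disjoint on u)) (hw : ∀ x ∈ T, 0 ≤ w x) :
    ∑ k, ∑ x ∈ u k ∩ T, w x ≤ ∑ x ∈ T, w x := by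
  rw [← sum_biUnion fun a _ b _ hab => (hu hab).mono inter_subset_left inter_subset_left]
  exact sum_le_sum_of_subset_of_nonneg (biUnion_subset.2 fun _ _ => inter_subset_right)
    fun x hx _ => hw x hx

theorem sum_ite_mem_le_of_pairwise_disjoint [Fintype κ] {u : κ → Finset ι} {C : ℝ}
    (hu : Pairwise (Disjoint on u)) (hC : 0 ≤ C) (j : ι) :
    ∑ k, (if j ∈ u k then C else 0) ≤ C := by
  rw [← sum_filter, sum_const, nsmul_eq_mul]
  have hcard : #(univ.filter fun k => j ∈ u k) ≤ 1 :=
    card_le_one.2 fun a ha b hb => by_contra fun hab =>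
      disjoint_left.1 (hu hab) (mem_filter.1 ha).2 (mem_filter.1 hb).2
  exact mul_le_of_le_one_left hC (by exact_mod_cast hcard)

theorem exists_subset_sum_mem_Icc {w : ι → ℝ} {a : ℝ} (ha : 0 ≤ a) (S : Finset ι)
    (hw : ∀ x ∈ S, w x ≤ a) (hS : a ≤ ∑ x ∈ S, w x) :
    ∃ S' ⊆ S, a ≤ ∑ x ∈ S', w x ∧ ∑ x ∈ S', w x ≤ 2 * a := by
  induction S using Finset.strongInduction with
  | H S ih =>
    by_cases hle : ∑ x ∈ S, w x ≤ 2 * a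
    · exact ⟨S, subset_rfl, hS, hle⟩
    obtain ⟨x, hx⟩ : S.Nonempty :=
      nonempty_of_sum_ne_zero fun h => hle (by rw [h]; linarith)
    have hsum := sum_erase_add S w hx
    obtain ⟨S', hS', hS'w⟩ := ih (S.erase x) (erase_ssubset hx)
      (fun y hy => hw y (mem_of_mem_erase hy)) (by linarith [hw x hx])
    exact ⟨S', hS'.trans (erase_subset _ _), hS'w⟩

end Finset

namespace Finpartition

variable {ι : Type*} [DecidableEq ι]

theorem exists_le_sum_of_forall_exists_part {U : Finset ι} (good : Finset ι → Prop)
    (Φ val : Finset ι → ℝ) (hΦ : Φ ∅ ≤ 0)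
    (hstep : ∀ X ⊆ U, X.Nonempty →
      ∃ T ⊆ X, T.Nonempty ∧ good T ∧ Φ X ≤ val T + Φ (X \ T)) :
    ∀ X ⊆ U, ∃ P : Finpartition X, (∀ S ∈ P.parts, good S) ∧ Φ X ≤ ∑ S ∈ P.parts, val S := by
  intro X
  induction X using Finset.strongInduction with
  | H X ih =>
    intro hXU
    rcases X.eq_empty_or_nonempty with rfl | hX
    · exact ⟨Finpartition.empty _, by simp, by simpa using hΦ⟩
    obtain ⟨T, hTX, hT, hgood, hΦT⟩ := hstep X hXU hX
    obtain ⟨P, hPgood, hPΦ⟩ := ih (X \ T) (sdiff_ssubset hTX hT) (sdiff_subset.trans hXU)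
    let Q := P.extend hT.ne_empty sdiff_disjoint (sdiff_union_of_subset hTX)
    have hTP : T ∉ P.parts := fun h =>
      hT.ne_empty (sdiff_disjoint.symm.eq_bot_of_le (P.le h))
    refine ⟨Q, fun S hS => ?_, ?_⟩
    · rcases mem_insert.1 hS with rfl | hS
      exacts [hgood, hPgood S hS]
    · rw [extend_parts, sum_insert hTP]
      linarith

end Finpartition

theorem isPartition_parts {I : Type*} [Fintype I] [DecidableEq I]
    (P : Finpartition (univ : Finset I)) : IsPartition P.parts :=
  ⟨fun j => P.exists_mem (mem_univ j), fun _ hS _ hT => P.disjoint hS hT, P.empty_notMem_parts⟩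

theorem IsCover.mono {I B M : Type*} {Iset : M → Finset I} {owner : I → B} {j : I}
    {S S' : Finset I} (hS : IsCover Iset owner j S) (h : S' ⊆ S) : IsCover Iset owner j S' :=
  let ⟨t, i', hjt, hi', hx⟩ := hS
  ⟨t, i', hjt, hi', fun x hx' => hx x (h hx')⟩

section Values

variable {I B : Type*} [Fintype B] {μ : I → ℝ} {vals : B → I → ℝ}

theorem hval_nonneg (j : I) : 0 ≤ hval μ vals j :=
  (le_fold_max _).2 (Or.inl le_rfl)

theorem hval_eq_mul_owner {owner : I → B} (hμ : ∀ j, 0 ≤ μ j) (hv : ∀ i j, 0 ≤ vals i j)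
    (howner : ∀ i j, vals i j ≤ vals (owner j) j) (x : I) :
    hval μ vals x = μ x * vals (owner x) x :=
  le_antisymm
    ((fold_max_le _).2 ⟨mul_nonneg (hμ x) (hv _ x),
      fun i _ => mul_le_mul_of_nonneg_left (howner i x) (hμ x)⟩)
    ((le_fold_max _).2 (Or.inr ⟨owner x, mem_univ _, le_rfl⟩))

variable [DecidableEq B]

theorem secondMax_nonneg (f : B → ℝ) : 0 ≤ secondMax f :=
  (le_fold_max _).2 (Or.inl le_rfl)

theorem min_le_secondMax (f : B → ℝ) {i₁ i₂ : B} (h : i₁ ≠ i₂) :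
    min (f i₁) (f i₂) ≤ secondMax f :=
  (le_fold_max _).2 (Or.inr ⟨(i₁, i₂), by simp [h], le_rfl⟩)

theorem partVal_nonneg (S : Finset I) : 0 ≤ partVal μ vals S :=
  secondMax_nonneg _

theorem min_le_partVal_insert [DecidableEq I] {owner : I → B} (hμ : ∀ j, 0 ≤ μ j)
    (hv : ∀ i j, 0 ≤ vals i j) (howner : ∀ i j, vals i j ≤ vals (owner j) j)
    {j : I} {S : Finset I} {i' : B} (hi' : i' ≠ owner j) (hS : ∀ x ∈ S, owner x = i')
    (hjS : j ∉ S) :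
    min (hval μ vals j) (∑ x ∈ S, hval μ vals x) ≤ partVal μ vals (insert j S) := by
  have hterm : ∀ i x, 0 ≤ μ x * vals i x := fun i x => mul_nonneg (hμ x) (hv i x)
  have hown : hval μ vals j ≤ ∑ x ∈ insert j S, μ x * vals (owner j) x := by
    rw [hval_eq_mul_owner hμ hv howner]
    exact single_le_sum (fun x _ => hterm (owner j) x) (mem_insert_self j S)
  have hother : ∑ x ∈ S, hval μ vals x ≤ ∑ x ∈ insert j S, μ x * vals i' x := by
    rw [sum_insert hjS, sum_congr rfl fun x hx => by rw [hval_eq_mul_owner hμ hv howner, hS x hx]]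
    linarith [hterm i' j]
  exact (min_le_min hown hother).trans
    (min_le_secondMax (fun i => ∑ x ∈ insert j S, μ x * vals i x) hi'.symm)

end Values

section Phi

variable {I B : Type*} [Fintype B] [DecidableEq B] {μ : I → ℝ} {vals : B → I → ℝ}
  {owner : I → B}

/-- The mass `Σ_{j ∈ H_i ∩ S} h_j` held by bidder `i` in `S`. -/
noncomputable def ownedMass (μ : I → ℝ) (vals : B → I → ℝ) (owner : I → B)
    (S : Finset I) (i : B) : ℝ :=
  ∑ j ∈ S.filter (fun j => owner j = i), hval μ vals j

noncomputable def maxOwnedMass (μ : I → ℝ) (vals : B → I → ℝ) (owner : I → B)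
    (S : Finset I) : ℝ :=
  univ.fold max 0 (ownedMass μ vals owner S)

theorem ownedMass_le_maxOwnedMass (S : Finset I) (i : B) :
    ownedMass μ vals owner S i ≤ maxOwnedMass μ vals owner S :=
  (le_fold_max _).2 (Or.inr ⟨i, mem_univ _, le_rfl⟩)

theorem maxOwnedMass_nonneg (S : Finset I) : 0 ≤ maxOwnedMass μ vals owner S :=
  (le_fold_max _).2 (Or.inl le_rfl)

theorem maxOwnedMass_le_sum (S : Finset I) :
    maxOwnedMass μ vals owner S ≤ ∑ j ∈ S, hval μ vals j :=
  (fold_max_le _).2 ⟨sum_nonneg fun j _ => hval_nonneg j, fun _ _ =>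
    sum_le_sum_of_subset_of_nonneg (filter_subset _ _) fun j _ _ => hval_nonneg j⟩

theorem maxOwnedMass_mono {S S' : Finset I} (h : S ⊆ S') :
    maxOwnedMass μ vals owner S ≤ maxOwnedMass μ vals owner S' :=
  (fold_max_le _).2 ⟨maxOwnedMass_nonneg S', fun i _ =>
    (sum_le_sum_of_subset_of_nonneg (filter_subset_filter _ h) fun j _ _ => hval_nonneg j).trans
      (ownedMass_le_maxOwnedMass S' i)⟩

theorem ownedMass_erase_self [DecidableEq I] {S : Finset I} {j : I} (hj : j ∈ S) :
    ownedMass μ vals owner (S.erase j) (owner j) =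
      ownedMass μ vals owner S (owner j) - hval μ vals j := by
  have hjf : j ∈ S.filter (fun x => owner x = owner j) := mem_filter.2 ⟨hj, rfl⟩
  rw [ownedMass, filter_erase, sum_erase_eq_sub hjf, ownedMass]

theorem ownedMass_erase_of_ne [DecidableEq I] (S : Finset I) {j : I} {i : B}
    (hi : owner j ≠ i) :
    ownedMass μ vals owner (S.erase j) i = ownedMass μ vals owner S i := by
  have hjf : j ∉ S.filter (fun x => owner x = i) := fun h => hi (mem_filter.1 h).2
  rw [ownedMass, filter_erase, erase_eq_of_notMem hjf, ownedMass]

variable [DecidableEq I]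

theorem phi_eq_sub (S : Finset I) :
    phi μ vals owner S = ∑ j ∈ S, hval μ vals j - maxOwnedMass μ vals owner S :=
  rfl

theorem phi_nonneg (S : Finset I) : 0 ≤ phi μ vals owner S :=
  sub_nonneg.2 (maxOwnedMass_le_sum S)

theorem phi_eq_zero_of_forall_eq {i₀ : B} (h : ∀ i, i = i₀) (S : Finset I) :
    phi μ vals owner S = 0 := by
  have hall : ownedMass μ vals owner S i₀ = ∑ j ∈ S, hval μ vals j := by
    rw [ownedMass, filter_true_of_mem fun x _ => h (owner x)]
  refine le_antisymm ?_ (phi_nonneg S)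
  rw [phi_eq_sub]
  linarith [ownedMass_le_maxOwnedMass (μ := μ) (vals := vals) (owner := owner) S i₀]

theorem phi_empty : phi μ vals owner ∅ = 0 := by
  refine le_antisymm ?_ (phi_nonneg ∅)
  rw [phi_eq_sub, sum_empty]
  linarith [maxOwnedMass_nonneg (μ := μ) (vals := vals) (owner := owner) ∅]

theorem phi_sub_phi_sdiff_le (S T : Finset I) :
    phi μ vals owner S - phi μ vals owner (S \ T) ≤ ∑ x ∈ S ∩ T, hval μ vals x := by
  rw [phi_eq_sub, phi_eq_sub, ← sum_inter_add_sum_sdiff S T]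
  linarith [maxOwnedMass_mono (μ := μ) (vals := vals) (owner := owner) (sdiff_subset : S \ T ⊆ S)]

/-- Deleting `j` can lower the maximal owned mass only by `h j`, unless another bidder's mass
takes over as the maximum; hence `φ` drops by at most the largest mass `C` of the others. -/
theorem phi_sub_phi_erase_le {S : Finset I} {j : I} (hj : j ∈ S) {C : ℝ} (hC0 : 0 ≤ C)
    (hC : ∀ i ≠ owner j, ownedMass μ vals owner S i ≤ C) :
    phi μ vals owner S - phi μ vals owner (S.erase j) ≤ C := by
  have hjown : hval μ vals j ≤ ownedMass μ vals owner S (owner j) :=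
    single_le_sum (fun x _ => hval_nonneg x) (mem_filter.2 ⟨hj, rfl⟩)
  have hjmax := hjown.trans (ownedMass_le_maxOwnedMass S (owner j))
  have hmax : maxOwnedMass μ vals owner (S.erase j) ≤
      maxOwnedMass μ vals owner S - hval μ vals j + C := by
    refine (fold_max_le _).2 ⟨by linarith, fun i _ => ?_⟩
    rcases eq_or_ne (owner j) i with rfl | hi
    · rw [ownedMass_erase_self hj]
      linarith [ownedMass_le_maxOwnedMass (μ := μ) (vals := vals) (owner := owner) S (owner j)]
    · rw [ownedMass_erase_of_ne S hi]
      linarith [hC i hi.symm]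
  rw [phi_eq_sub, phi_eq_sub, ← sum_erase_add S _ hj]
  linarith

open Function

variable {M : Type*} [Fintype M] {u : M → Finset I}

theorem sum_phi_sub_phi_sdiff_le (hu : Pairwise (Disjoint on u)) (T : Finset I) :
    ∑ t, (phi μ vals owner (u t) - phi μ vals owner (u t \ T)) ≤ ∑ x ∈ T, hval μ vals x :=
  (sum_le_sum fun t _ => phi_sub_phi_sdiff_le (u t) T).trans
    (sum_sum_inter_le_of_pairwise_disjoint hu fun x _ => hval_nonneg x)

theorem sum_phi_sub_phi_sdiff_insert_le (hu : Pairwise (Disjoint on u)) {j : I} {C : ℝ}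
    (hC0 : 0 ≤ C) (hC : ∀ t, j ∈ u t → ∀ i ≠ owner j, ownedMass μ vals owner (u t) i ≤ C)
    (S : Finset I) :
    ∑ t, (phi μ vals owner (u t) - phi μ vals owner (u t \ insert j S)) ≤
      C + ∑ x ∈ S, hval μ vals x := by
  have hstep : ∀ t, phi μ vals owner (u t) - phi μ vals owner (u t \ insert j S) ≤
      (if j ∈ u t then C else 0) + ∑ x ∈ u t ∩ S, hval μ vals x := by
    intro t
    have hj : phi μ vals owner (u t) - phi μ vals owner ((u t).erase j) ≤
        if j ∈ u t then C else 0 := by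
      split_ifs with hjt
      · exact phi_sub_phi_erase_le hjt hC0 (hC t hjt)
      · rw [erase_eq_of_notMem hjt, sub_self]
    have hS := phi_sub_phi_sdiff_le (μ := μ) (vals := vals) (owner := owner) ((u t).erase j) S
    have hmono : ∑ x ∈ (u t).erase j ∩ S, hval μ vals x ≤ ∑ x ∈ u t ∩ S, hval μ vals x :=
      sum_le_sum_of_subset_of_nonneg (inter_subset_inter_right (erase_subset _ _))
        fun x _ _ => hval_nonneg x
    rw [sdiff_insert, ← erase_sdiff_comm]
    linarith
  calc _ ≤ ∑ t, ((if j ∈ u t then C else 0) + ∑ x ∈ u t ∩ S, hval μ vals x) :=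
        sum_le_sum fun t _ => hstep t
    _ ≤ C + ∑ x ∈ S, hval μ vals x := by
      rw [sum_add_distrib]
      exact add_le_add (sum_ite_mem_le_of_pairwise_disjoint hu hC0 j)
        (sum_sum_inter_le_of_pairwise_disjoint hu fun x _ => hval_nonneg x)

end Phi

section Greedy

variable {I B M : Type*} [DecidableEq I] [Fintype B]
  {μ : I → ℝ} {vals : B → I → ℝ} {Iset : M → Finset I} {owner : I → B} {A : M → Finset I}

def IsGreedyCover (μ : I → ℝ) (vals : B → I → ℝ) (Iset : M → Finset I) (owner : I → B)
    (I' : Finset I) (j : I) (Sj : Finset I) : Prop :=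
  (hval μ vals j ≤ ∑ x ∈ Sj, hval μ vals x ∧ ∑ x ∈ Sj, hval μ vals x ≤ 2 * hval μ vals j) ∨
    ((∑ x ∈ Sj, hval μ vals x) < hval μ vals j ∧
      ∀ S' ⊆ I'.erase j, IsCover Iset owner j S' →
        ∑ x ∈ S', hval μ vals x ≤ ∑ x ∈ Sj, hval μ vals x)

/-- Covers are closed under subsets, so a cover of value at least `h j` can be trimmed item by
item (each worth at most `h j`) until its value falls into `[h j, 2 h j]`. -/
theorem exists_isGreedyCover {I' : Finset I} {j : I} {t₀ : M} {i' : B} (hjt₀ : j ∈ Iset t₀)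
    (hi' : i' ≠ owner j) (hmax : ∀ x ∈ I', hval μ vals x ≤ hval μ vals j) :
    ∃ Sj ⊆ I'.erase j, IsCover Iset owner j Sj ∧
      IsGreedyCover μ vals Iset owner I' j Sj := by
  classical
  let covers := (I'.erase j).powerset.filter (IsCover Iset owner j)
  have hempty : ∅ ∈ covers :=
    mem_filter.2 ⟨empty_mem_powerset _, t₀, i', hjt₀, hi', by simp⟩
  obtain ⟨S, hS, hSmax⟩ := exists_max_image covers (fun S => ∑ x ∈ S, hval μ vals x) ⟨∅, hempty⟩
  rw [mem_filter, mem_powerset] at hS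
  by_cases hlt : ∑ x ∈ S, hval μ vals x < hval μ vals j
  · exact ⟨S, hS.1, hS.2, Or.inr ⟨hlt, fun S' hS' hcov =>
      hSmax S' (mem_filter.2 ⟨mem_powerset.2 hS', hcov⟩)⟩⟩
  obtain ⟨S', hS'S, hS'⟩ := exists_subset_sum_mem_Icc (hval_nonneg j) S
    (fun x hx => hmax x (mem_of_mem_erase (hS.1 hx))) (not_lt.1 hlt)
  exact ⟨S', hS'S.trans hS.1, hS.2.mono hS'S, Or.inl hS'⟩

variable [DecidableEq B] [Fintype M]

theorem greedy_step (hμ : ∀ j, 0 ≤ μ j) (hv : ∀ i j, 0 ≤ vals i j)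
    (howner : ∀ i j, vals i j ≤ vals (owner j) j) (hA : ∀ t, A t ⊆ Iset t)
    (hAdisj : ∀ t t', t ≠ t' → Disjoint (A t) (A t')) {I' : Finset I} {j : I}
    {Sj : Finset I} (hSj : Sj ⊆ I'.erase j) (hcov : IsCover Iset owner j Sj)
    (hgreedy : IsGreedyCover μ vals Iset owner I' j Sj) :
    (1 / 3 : ℝ) * ∑ t, phi μ vals owner (A t ∩ I') ≤
      partVal μ vals (insert j Sj) +
        (1 / 3 : ℝ) * ∑ t, phi μ vals owner (A t ∩ (I' \ insert j Sj)) := by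
  have hjSj : j ∉ Sj := fun h => (mem_erase.1 (hSj h)).1 rfl
  obtain ⟨_, i', _, hi', hSjown⟩ := hcov
  have hpart := min_le_partVal_insert hμ hv howner hi' (fun x hx => (hSjown x hx).2) hjSj
  have hu : Pairwise fun t t' => Disjoint (A t ∩ I') (A t' ∩ I') := fun t t' h =>
    (hAdisj t t' h).mono inter_subset_left inter_subset_left
  suffices hloss : ∑ t, (phi μ vals owner (A t ∩ I') -
      phi μ vals owner ((A t ∩ I') \ insert j Sj)) ≤ 3 * partVal μ vals (insert j Sj) by
    simp only [sum_sub_distrib, inter_sdiff_assoc] at hloss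
    linarith
  rcases hgreedy with ⟨hge, hle⟩ | ⟨hlt, hbest⟩
  · rw [min_eq_left hge] at hpart
    calc _ ≤ ∑ x ∈ insert j Sj, hval μ vals x := sum_phi_sub_phi_sdiff_le hu _
      _ = hval μ vals j + ∑ x ∈ Sj, hval μ vals x := sum_insert hjSj
      _ ≤ 3 * partVal μ vals (insert j Sj) := by linarith
  · rw [min_eq_right hlt.le] at hpart
    -- inside `A t`, the items of any bidder `i ≠ owner j` form a cover of `j`
    have hother : ∀ t, j ∈ A t ∩ I' → ∀ i ≠ owner j,
        ownedMass μ vals owner (A t ∩ I') i ≤ ∑ x ∈ Sj, hval μ vals x := by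
      intro t hjt i hi
      refine hbest _ (fun x hx => ?_) ⟨t, i, hA t (mem_inter.1 hjt).1, hi, fun x hx => ?_⟩
      · obtain ⟨hx, hxi⟩ := mem_filter.1 hx
        exact mem_erase.2 ⟨fun hxj => hi (hxj ▸ hxi).symm, (mem_inter.1 hx).2⟩
      · obtain ⟨hx, hxi⟩ := mem_filter.1 hx
        exact ⟨hA t (mem_inter.1 hx).1, hxi⟩
    calc _ ≤ ∑ x ∈ Sj, hval μ vals x + ∑ x ∈ Sj, hval μ vals x :=
          sum_phi_sub_phi_sdiff_insert_le hu (sum_nonneg fun x _ => hval_nonneg x) hother Sj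
      _ ≤ 3 * partVal μ vals (insert j Sj) := by
        linarith [partVal_nonneg (μ := μ) (vals := vals) (insert j Sj)]

theorem exists_greedy_part (hμ : ∀ j, 0 ≤ μ j) (hv : ∀ i j, 0 ≤ vals i j)
    (howner : ∀ i j, vals i j ≤ vals (owner j) j) (hA : ∀ t, A t ⊆ Iset t)
    (hAdisj : ∀ t t', t ≠ t' → Disjoint (A t) (A t')) {I' : Finset I}
    (hI' : I' ⊆ univ.sup Iset) (hne : I'.Nonempty) :
    ∃ T ⊆ I', T.Nonempty ∧ (∃ t, T ⊆ Iset t) ∧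
      (1 / 3 : ℝ) * ∑ t, phi μ vals owner (A t ∩ I') ≤
        partVal μ vals T + (1 / 3 : ℝ) * ∑ t, phi μ vals owner (A t ∩ (I' \ T)) := by
  obtain ⟨j, hj, hmax⟩ := exists_max_image I' (hval μ vals) hne
  obtain ⟨t₀, -, hjt₀⟩ := mem_sup.1 (hI' hj)
  by_cases hB : ∃ i', i' ≠ owner j
  · obtain ⟨i', hi'⟩ := hB
    obtain ⟨Sj, hSj, hcov, hgreedy⟩ := exists_isGreedyCover hjt₀ hi' hmax
    have hstep := greedy_step hμ hv howner hA hAdisj hSj hcov hgreedy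
    obtain ⟨t, _, hjt, _, hSjt⟩ := hcov
    exact ⟨insert j Sj, insert_subset hj (hSj.trans (erase_subset _ _)), insert_nonempty _ _,
      ⟨t, insert_subset hjt fun x hx => (hSjt x hx).1⟩, hstep⟩
  · push Not at hB
    refine ⟨{j}, singleton_subset_iff.2 hj, singleton_nonempty j,
      ⟨t₀, singleton_subset_iff.2 hjt₀⟩, ?_⟩
    simp only [phi_eq_zero_of_forall_eq hB, sum_const_zero, mul_zero, add_zero]
    exact partVal_nonneg _

end Greedy

/-- The greedy auxiliary algorithm for local experts: (a) no iteration decreases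
`R(P) + (1/3) Σ_t φ(A_t ∩ I')` — adding the part `{j} ∪ S_j` (for `j` of maximal `h` in
the pool `I'` and `S_j` a cover chosen by the greedy rule) gains at least a third of the
loss in `Σ_t φ(A_t ∩ I')`; (b) consequently, there is a joint partition `P_A`
implementable by the local experts with `R(P_A) ≥ (1/3) Σ_t φ(A_t)`. -/
theorem local_experts_greedy {I B M : Type*} [Fintype I] [DecidableEq I]
    [Fintype B] [DecidableEq B] [Fintype M]
    (μ : I → ℝ) (vals : B → I → ℝ)
    (hμ : ∀ j, 0 ≤ μ j) (hv : ∀ i j, 0 ≤ vals i j)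
    (Iset : M → Finset I)
    (owner : I → B) (howner : ∀ (i : B) (j : I), vals i j ≤ vals (owner j) j)
    (A : M → Finset I) (hA : ∀ t, A t ⊆ Iset t)
    (hAdisj : ∀ t t', t ≠ t' → Disjoint (A t) (A t')) :
    (∀ (I' : Finset I) (j : I) (Sj : Finset I),
      j ∈ I' → (∀ j' ∈ I', hval μ vals j' ≤ hval μ vals j) →
      Sj ⊆ I'.erase j → IsCover Iset owner j Sj →
      ((hval μ vals j ≤ ∑ x ∈ Sj, hval μ vals x ∧
          ∑ x ∈ Sj, hval μ vals x ≤ 2 * hval μ vals j) ∨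
        ((∑ x ∈ Sj, hval μ vals x) < hval μ vals j ∧
          ∀ S' ⊆ I'.erase j, IsCover Iset owner j S' →
            ∑ x ∈ S', hval μ vals x ≤ ∑ x ∈ Sj, hval μ vals x)) →
      (1 / 3 : ℝ) * ∑ t : M, phi μ vals owner (A t ∩ I') ≤
        partVal μ vals (insert j Sj) +
          (1 / 3 : ℝ) * ∑ t : M, phi μ vals owner (A t ∩ (I' \ insert j Sj))) ∧
    ∃ PA : Finset (Finset I), IsPartition PA ∧
      (∀ S ∈ PA, S = (Finset.univ.sup Iset)ᶜ ∨ ∃ t : M, S ⊆ Iset t) ∧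
      (1 / 3 : ℝ) * (∑ t : M, phi μ vals owner (A t)) ≤ revenue μ vals PA := by
  refine ⟨fun I' j Sj _ _ hSj hcov hgreedy =>
    greedy_step hμ hv howner hA hAdisj hSj hcov hgreedy, ?_⟩
  set U := univ.sup Iset
  obtain ⟨P, hPgood, hP⟩ := Finpartition.exists_le_sum_of_forall_exists_part
    (fun T => ∃ t, T ⊆ Iset t) (fun X => (1 / 3 : ℝ) * ∑ t, phi μ vals owner (A t ∩ X))
    (partVal μ vals) (by simp only [inter_empty, phi_empty, sum_const_zero, mul_zero, le_refl])
    (fun X hX hne => exists_greedy_part hμ hv howner hA hAdisj hX hne) U subset_rfl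
  let Q := P.extendOfLE (subset_univ U)
  refine ⟨Q.parts, isPartition_parts Q, fun S hS => ?_, ?_⟩
  · rcases P.mem_parts_or_eq_sdiff_of_mem_extendOfLE (subset_univ U) hS with hS | rfl
    exacts [Or.inr (hPgood S hS), Or.inl (compl_eq_univ_sdiff U).symm]
  · have hAU : ∀ t, A t ∩ U = A t := fun t =>
      inter_eq_left.2 ((hA t).trans (le_sup (mem_univ t)))
    calc (1 / 3 : ℝ) * ∑ t, phi μ vals owner (A t)
        = (1 / 3 : ℝ) * ∑ t, phi μ vals owner (A t ∩ U) := by simp only [hAU]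
      _ ≤ ∑ S ∈ P.parts, partVal μ vals S := hP
      _ ≤ revenue μ vals Q.parts := sum_le_sum_of_subset_of_nonneg
          (P.parts_subset_extendOfLE _) fun S _ _ => partVal_nonneg S
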